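/- Let (ε₁, ε₂) be bivariate standard normal with correlation ρ. Suppose that for two pairs (c₁, c₂) and (c₁', c₂) with c₁ ≠ c₁' the probabilities P(ε₁ ≤ c₁, ε₂ ≤ c₂) and P(ε₁ ≤ c₁', ε₂ ≤ c₂) are both known, as are c₁, c₁', c₂. If c₁ > 0 > c₁' and c₂ < 0, then ρ is uniquely determined by these two probabilities. -/

import Mathlib

open MeasureTheory

/-- The bivariate standard normal density with correlation `ρ`. -/
noncomputable def biphi (ρ u v : ℝ) : ℝ :=
  (2 * Real.pi * Real.sqrt (1 - ρ ^ 2))⁻¹ *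
    Real.exp (-(u ^ 2 - 2 * ρ * u * v + v ^ 2) / (2 * (1 - ρ ^ 2)))

/-- `P(ε₁ ≤ c₁, ε₂ ≤ c₂)` for a bivariate standard normal pair with correlation `ρ`. -/
noncomputable def binormProb (ρ c₁ c₂ : ℝ) : ℝ :=
  ∫ p in Set.Iic c₁ ×ˢ Set.Iic c₂, biphi ρ p.1 p.2

namespace BiphiAux

open Real Set Filter Topology

/-- mixed partial `∂u ∂v` of `biphi`, which is also its `∂ρ` (Plackett). -/
noncomputable def DtB (t u v : ℝ) : ℝ :=
  biphi t u v * ((t * (1 - t^2) + u * v * (1 - t^2) - t * (u^2 - 2*t*u*v + v^2)) / (1 - t^2)^2)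

/-- `∂u` of `biphi`. -/
noncomputable def g1B (t u v : ℝ) : ℝ := biphi t u v * ((t*v - u) / (1 - t^2))

lemma one_sub_sq_pos {t : ℝ} (h : t ∈ Set.Ioo (-1:ℝ) 1) : 0 < 1 - t^2 := by
  nlinarith [h.1, h.2]

lemma hasDerivAt_biphi_u {t : ℝ} (ht : 0 < 1 - t^2) (u v : ℝ) :
    HasDerivAt (fun u => biphi t u v) (g1B t u v) u := by
  have hq : HasDerivAt (fun u : ℝ => u^2 - 2*t*u*v + v^2) (2*u - 2*t*v) u := by
    have h1 : HasDerivAt (fun u : ℝ => u^2) (2*u) u := by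
      simpa using hasDerivAt_pow 2 u
    have h2 : HasDerivAt (fun u : ℝ => 2*t*u*v) (2*t*v) u := by
      simpa using (((hasDerivAt_id u).const_mul (2*t)).mul_const v)
    simpa using (h1.sub h2).add_const (v^2)
  have hE : HasDerivAt (fun u : ℝ => -(u^2 - 2*t*u*v + v^2) / (2*(1 - t^2)))
      (-(2*u - 2*t*v) / (2*(1 - t^2))) u := hq.neg.div_const _
  have := (hE.exp.const_mul ((2 * Real.pi * Real.sqrt (1 - t^2))⁻¹))
  refine this.congr_deriv ?_
  symm
  unfold g1B biphi
  field_simp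
  ring

lemma hasDerivAt_g1B_v {t : ℝ} (ht : 0 < 1 - t^2) (u v : ℝ) :
    HasDerivAt (fun v => g1B t u v) (DtB t u v) v := by
  have hq : HasDerivAt (fun v : ℝ => u^2 - 2*t*u*v + v^2) (-(2*t*u) + 2*v) v := by
    have h1 : HasDerivAt (fun v : ℝ => v^2) (2*v) v := by
      simpa using hasDerivAt_pow 2 v
    have h2 : HasDerivAt (fun v : ℝ => 2*t*u*v) (2*t*u) v := by
      simpa using ((hasDerivAt_id v).const_mul (2*t*u))
    have h3 : HasDerivAt (fun v : ℝ => u^2 - 2*t*u*v) (-(2*t*u)) v := by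
      simpa using (h2.const_sub (u^2))
    exact h3.add h1
  have hE : HasDerivAt (fun v : ℝ => -(u^2 - 2*t*u*v + v^2) / (2*(1 - t^2)))
      (-(-(2*t*u) + 2*v) / (2*(1 - t^2))) v := hq.neg.div_const _
  have hb : HasDerivAt (fun v => biphi t u v)
      ((2 * Real.pi * Real.sqrt (1 - t^2))⁻¹ *
        (Real.exp (-(u^2 - 2*t*u*v + v^2) / (2*(1 - t^2))) * (-(-(2*t*u) + 2*v) / (2*(1 - t^2))))) v := by
    have := (hE.exp.const_mul ((2 * Real.pi * Real.sqrt (1 - t^2))⁻¹))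
    exact this
  have hl : HasDerivAt (fun v : ℝ => (t*v - u) / (1 - t^2)) (t / (1 - t^2)) v := by
    have h2 : HasDerivAt (fun v : ℝ => t*v - u) t v := by
      simpa using ((hasDerivAt_id v).const_mul t).sub_const u
    simpa using h2.div_const (1 - t^2)
  have := hb.mul hl
  refine this.congr_deriv ?_
  symm
  unfold DtB biphi
  field_simp
  ring

lemma hasDerivAt_biphi_t {t : ℝ} (ht : 0 < 1 - t^2) (u v : ℝ) :
    HasDerivAt (fun t => biphi t u v) (DtB t u v) t := by
  have hS : Real.sqrt (1 - t^2) ≠ 0 := by positivity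
  have hSsq : Real.sqrt (1 - t^2) ^ 2 = 1 - t^2 := Real.sq_sqrt ht.le
  have hinner : HasDerivAt (fun t : ℝ => 1 - t^2) (-(2*t)) t := by
    simpa using ((hasDerivAt_pow 2 t).const_sub 1)
  have hsqrt : HasDerivAt (fun t : ℝ => Real.sqrt (1 - t^2)) (-(2*t) / (2 * Real.sqrt (1 - t^2))) t :=
    hinner.sqrt ht.ne'
  have hpre : HasDerivAt (fun t : ℝ => (2 * Real.pi * Real.sqrt (1 - t^2))⁻¹)
      (-(2 * Real.pi * (-(2*t) / (2 * Real.sqrt (1 - t^2)))) / (2 * Real.pi * Real.sqrt (1 - t^2))^2) t := by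
    have h1 : HasDerivAt (fun t : ℝ => 2 * Real.pi * Real.sqrt (1 - t^2))
        (2 * Real.pi * (-(2*t) / (2 * Real.sqrt (1 - t^2)))) t := hsqrt.const_mul _
    exact h1.inv (by positivity)
  have hnum : HasDerivAt (fun t : ℝ => -(u^2 - 2*t*u*v + v^2)) (2*u*v) t := by
    have h2 : HasDerivAt (fun t : ℝ => 2*t*u*v) (2*u*v) t := by
      have := ((hasDerivAt_id t).const_mul 2).mul_const u |>.mul_const v
      simpa [mul_assoc, mul_comm, mul_left_comm] using this
    have h3 : HasDerivAt (fun t : ℝ => u^2 - 2*t*u*v + v^2) (-(2*u*v)) t := by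
      simpa using (h2.const_sub (u^2)).add_const (v^2)
    exact h3.neg.congr_deriv (neg_neg _)
  have hden : HasDerivAt (fun t : ℝ => 2*(1 - t^2)) (2 * -(2*t)) t := hinner.const_mul 2
  have hE : HasDerivAt (fun t : ℝ => -(u^2 - 2*t*u*v + v^2) / (2*(1 - t^2)))
      ((2*u*v * (2*(1 - t^2)) - -(u^2 - 2*t*u*v + v^2) * (2 * -(2*t))) / (2*(1 - t^2))^2) t :=
    hnum.div hden (by positivity)
  have := hpre.mul hE.exp
  refine this.congr_deriv ?_
  symm
  unfold DtB biphi
  have hpi := Real.pi_ne_zero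
  set S := Real.sqrt (1 - t^2) with hSdef
  have hS0 : S ≠ 0 := hS
  have hS2 : S ^ 2 = 1 - t ^ 2 := hSsq
  clear_value S
  rw [← hS2]
  field_simp
  ring

lemma biphi_pos {t : ℝ} (ht : 0 < 1 - t^2) (u v : ℝ) : 0 < biphi t u v := by
  unfold biphi
  have : 0 < Real.sqrt (1 - t^2) := Real.sqrt_pos.2 ht
  positivity

lemma poly_exp_le {x k : ℝ} (hx : 0 ≤ x) (hk : 0 ≤ k) :
    (1 + k*x) * Real.exp (-x/4) ≤ (1 + 8*k) * Real.exp (-x/8) := by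
  have h1 : x/8 + 1 ≤ Real.exp (x/8) := Real.add_one_le_exp _
  have h2 : Real.exp (-x/8) = Real.exp (x/8) * Real.exp (-x/4) := by
    rw [← Real.exp_add]; ring_nf
  rw [h2, ← mul_assoc]
  have h3 : (1 + k*x) ≤ (1 + 8*k) * Real.exp (x/8) := by nlinarith [mul_nonneg hk hx]
  exact mul_le_mul_of_nonneg_right h3 (Real.exp_pos _).le

lemma exp_arg_le {t : ℝ} (ht : 0 < 1 - t^2) (u v : ℝ) :
    (u^2 + v^2)/4 ≤ (u^2 - 2*t*u*v + v^2) / (2*(1 - t^2)) := by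
  rw [div_le_div_iff₀ (by norm_num) (by linarith)]
  nlinarith [sq_nonneg (u - t*v), sq_nonneg (t*u - v)]

lemma biphi_le {t σ : ℝ} (hσ : 0 < σ) (hts : σ ≤ 1 - t^2) (u v : ℝ) :
    biphi t u v ≤ (2*Real.pi*Real.sqrt σ)⁻¹ * Real.exp (-(u^2+v^2)/4) := by
  have ht : 0 < 1 - t^2 := lt_of_lt_of_le hσ hts
  unfold biphi
  have h1 : (2 * Real.pi * Real.sqrt (1 - t^2))⁻¹ ≤ (2*Real.pi*Real.sqrt σ)⁻¹ := by
    apply inv_anti₀ (by positivity)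
    have := Real.sqrt_le_sqrt hts
    nlinarith [Real.pi_pos, Real.sqrt_nonneg σ]
  have h2 : Real.exp (-(u ^ 2 - 2 * t * u * v + v ^ 2) / (2 * (1 - t ^ 2)))
      ≤ Real.exp (-(u^2+v^2)/4) := by
    apply Real.exp_le_exp.2
    have := exp_arg_le ht u v
    rw [neg_div, neg_div]
    linarith
  have h3 : (0:ℝ) < (2 * Real.pi * Real.sqrt (1 - t^2))⁻¹ := by
    have : 0 < Real.sqrt (1 - t^2) := Real.sqrt_pos.2 ht
    positivity
  exact mul_le_mul h1 h2 (Real.exp_pos _).le (by positivity)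

lemma abs_t_le {t σ : ℝ} (hσ : 0 < σ) (hts : σ ≤ 1 - t^2) : |t| ≤ 1 := by
  rw [abs_le]; constructor <;> nlinarith

lemma abs_g1B_le {t σ : ℝ} (hσ : 0 < σ) (hts : σ ≤ 1 - t^2) (u v : ℝ) :
    |g1B t u v| ≤ (2*Real.pi*Real.sqrt σ)⁻¹ * σ⁻¹ * 9 * Real.exp (-(u^2+v^2)/8) := by
  have ht : 0 < 1 - t^2 := lt_of_lt_of_le hσ hts
  have hbp := (biphi_pos ht u v).le
  have hble := biphi_le hσ hts u v
  have hA : (0:ℝ) < (2*Real.pi*Real.sqrt σ)⁻¹ := by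
    have : 0 < Real.sqrt σ := Real.sqrt_pos.2 hσ
    positivity
  have habs : |g1B t u v| = biphi t u v * (|t*v - u| / (1 - t^2)) := by
    unfold g1B
    rw [abs_mul, abs_of_nonneg hbp, abs_div, abs_of_pos ht]
  rw [habs]
  have ht1 : |t| ≤ 1 := abs_t_le hσ hts
  have hnum : |t*v - u| ≤ 1 + (u^2+v^2) := by
    have h1 : |t*v - u| ≤ |t| * |v| + |u| := by
      calc |t*v - u| ≤ |t*v| + |u| := abs_sub _ _
        _ = |t| * |v| + |u| := by rw [abs_mul]
    nlinarith [abs_nonneg v, abs_nonneg u, sq_abs u, sq_abs v,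
      sq_nonneg (|u| - 1), sq_nonneg (|v| - 1), abs_nonneg (t*v - u)]
  have hfrac : |t*v - u| / (1 - t^2) ≤ (1 + (u^2+v^2)) / σ :=
    div_le_div₀ (by positivity) hnum hσ hts
  calc biphi t u v * (|t*v - u| / (1 - t^2))
      ≤ ((2*Real.pi*Real.sqrt σ)⁻¹ * Real.exp (-(u^2+v^2)/4)) * ((1 + (u^2+v^2)) / σ) := by
        apply mul_le_mul hble hfrac (by positivity) (by positivity)
    _ = (2*Real.pi*Real.sqrt σ)⁻¹ * σ⁻¹ * ((1 + 1*(u^2+v^2)) * Real.exp (-(u^2+v^2)/4)) := by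
        field_simp
    _ ≤ (2*Real.pi*Real.sqrt σ)⁻¹ * σ⁻¹ * ((1 + 8*1) * Real.exp (-(u^2+v^2)/8)) := by
        apply mul_le_mul_of_nonneg_left (poly_exp_le (by positivity) (by norm_num)) (by positivity)
    _ = (2*Real.pi*Real.sqrt σ)⁻¹ * σ⁻¹ * 9 * Real.exp (-(u^2+v^2)/8) := by ring

lemma abs_DtB_le {t σ : ℝ} (hσ : 0 < σ) (hts : σ ≤ 1 - t^2) (u v : ℝ) :
    |DtB t u v| ≤ (2*Real.pi*Real.sqrt σ)⁻¹ * (σ^2)⁻¹ * 25 * Real.exp (-(u^2+v^2)/8) := by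
  have ht : 0 < 1 - t^2 := lt_of_lt_of_le hσ hts
  have hbp := (biphi_pos ht u v).le
  have hble := biphi_le hσ hts u v
  have habs : |DtB t u v| = biphi t u v *
      (|t * (1 - t^2) + u * v * (1 - t^2) - t * (u^2 - 2*t*u*v + v^2)| / (1 - t^2)^2) := by
    unfold DtB
    rw [abs_mul, abs_of_nonneg hbp, abs_div,
      abs_of_nonneg (by positivity : (0:ℝ) ≤ (1 - t^2)^2)]
  rw [habs]
  have ht1 : |t| ≤ 1 := abs_t_le hσ hts
  have hnum : |t * (1 - t^2) + u * v * (1 - t^2) - t * (u^2 - 2*t*u*v + v^2)|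
      ≤ 1 + 3*(u^2+v^2) := by
    have huv : |u*v| ≤ (u^2+v^2)/2 := by
      rw [abs_le]; constructor <;> nlinarith [sq_nonneg (u-v), sq_nonneg (u+v)]
    have hq : |u^2 - 2*t*u*v + v^2| ≤ 2*(u^2+v^2) := by
      rw [abs_le]
      constructor <;> nlinarith [abs_le.1 huv, abs_le.1 ht1]
    have h1 : |t * (1 - t^2)| ≤ 1 := by
      rw [abs_mul, abs_of_pos ht]
      nlinarith [abs_le.1 ht1, abs_nonneg t]
    have h2 : |u * v * (1 - t^2)| ≤ (u^2+v^2)/2 := by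
      rw [abs_mul, abs_of_pos ht]
      nlinarith [abs_le.1 huv, abs_nonneg (u*v)]
    have h3 : |t * (u^2 - 2*t*u*v + v^2)| ≤ 2*(u^2+v^2) := by
      rw [abs_mul]
      nlinarith [abs_le.1 hq, abs_nonneg (u^2 - 2*t*u*v + v^2), abs_le.1 ht1,
        abs_nonneg t, abs_nonneg (u^2 - 2*t*u*v + v^2)]
    calc |t * (1 - t^2) + u * v * (1 - t^2) - t * (u^2 - 2*t*u*v + v^2)|
        ≤ |t * (1 - t^2) + u * v * (1 - t^2)| + |t * (u^2 - 2*t*u*v + v^2)| := abs_sub _ _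
      _ ≤ |t * (1 - t^2)| + |u * v * (1 - t^2)| + |t * (u^2 - 2*t*u*v + v^2)| := by
          linarith [abs_add_le (t * (1 - t^2)) (u * v * (1 - t^2))]
      _ ≤ 1 + 3*(u^2+v^2) := by nlinarith [sq_nonneg u, sq_nonneg v]
  have hfrac : |t * (1 - t^2) + u * v * (1 - t^2) - t * (u^2 - 2*t*u*v + v^2)| / (1 - t^2)^2
      ≤ (1 + 3*(u^2+v^2)) / σ^2 := by
    apply div_le_div₀ (by positivity) hnum (by positivity)
    nlinarith
  calc biphi t u v * (|t * (1 - t^2) + u * v * (1 - t^2) - t * (u^2 - 2*t*u*v + v^2)| / (1 - t^2)^2)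
      ≤ ((2*Real.pi*Real.sqrt σ)⁻¹ * Real.exp (-(u^2+v^2)/4)) * ((1 + 3*(u^2+v^2)) / σ^2) := by
        apply mul_le_mul hble hfrac (by positivity) ?_
        have : 0 < Real.sqrt σ := Real.sqrt_pos.2 hσ
        positivity
    _ = (2*Real.pi*Real.sqrt σ)⁻¹ * (σ^2)⁻¹ * ((1 + 3*(u^2+v^2)) * Real.exp (-(u^2+v^2)/4)) := by
        field_simp
    _ ≤ (2*Real.pi*Real.sqrt σ)⁻¹ * (σ^2)⁻¹ * ((1 + 8*3) * Real.exp (-(u^2+v^2)/8)) := by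
        apply mul_le_mul_of_nonneg_left (poly_exp_le (by positivity) (by norm_num)) ?_
        have : 0 < Real.sqrt σ := Real.sqrt_pos.2 hσ
        positivity
    _ = (2*Real.pi*Real.sqrt σ)⁻¹ * (σ^2)⁻¹ * 25 * Real.exp (-(u^2+v^2)/8) := by ring

/-! ### splitting the Gaussian bound -/

lemma exp_split (u v : ℝ) :
    Real.exp (-(u^2+v^2)/8) = Real.exp (-u^2/8) * Real.exp (-v^2/8) := by
  rw [← Real.exp_add]; congr 1; ring

lemma abs_biphi_le' {t σ : ℝ} (hσ : 0 < σ) (hts : σ ≤ 1 - t^2) (u v : ℝ) :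
    |biphi t u v| ≤ (2*Real.pi*Real.sqrt σ)⁻¹ * (Real.exp (-u^2/8) * Real.exp (-v^2/8)) := by
  have ht : 0 < 1 - t^2 := lt_of_lt_of_le hσ hts
  rw [abs_of_pos (biphi_pos ht u v), ← exp_split]
  refine le_trans (biphi_le hσ hts u v) ?_
  have hA : (0:ℝ) ≤ (2*Real.pi*Real.sqrt σ)⁻¹ := by positivity
  apply mul_le_mul_of_nonneg_left _ hA
  apply Real.exp_le_exp.2
  nlinarith [sq_nonneg u, sq_nonneg v]

lemma abs_g1B_le' {t σ : ℝ} (hσ : 0 < σ) (hts : σ ≤ 1 - t^2) (u v : ℝ) :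
    |g1B t u v| ≤ (2*Real.pi*Real.sqrt σ)⁻¹ * σ⁻¹ * 9 * (Real.exp (-u^2/8) * Real.exp (-v^2/8)) := by
  rw [← exp_split]; exact abs_g1B_le hσ hts u v

lemma abs_DtB_le' {t σ : ℝ} (hσ : 0 < σ) (hts : σ ≤ 1 - t^2) (u v : ℝ) :
    |DtB t u v| ≤ (2*Real.pi*Real.sqrt σ)⁻¹ * (σ^2)⁻¹ * 25 * (Real.exp (-u^2/8) * Real.exp (-v^2/8)) := by
  rw [← exp_split]; exact abs_DtB_le hσ hts u v

/-! ### tendsto lemmas -/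

lemma tendsto_sq_atBot : Tendsto (fun x : ℝ => x^2) atBot atTop := by
  have := (tendsto_pow_atTop (n := 2) (by norm_num)).comp
    (tendsto_abs_atBot_atTop : Tendsto (fun x:ℝ => |x|) atBot atTop)
  have heq : ((fun x : ℝ => x ^ 2) ∘ abs) = fun x : ℝ => x^2 := by
    funext x; simp [Function.comp, sq_abs]
  rwa [heq] at this

lemma tendsto_gauss_simple (K : ℝ) :
    Tendsto (fun x : ℝ => K * Real.exp (-x^2/8)) atBot (𝓝 0) := by
  have h3 : Tendsto (fun x : ℝ => -x^2) atBot atBot :=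
    tendsto_neg_atTop_atBot.comp tendsto_sq_atBot
  have h4 : Tendsto (fun x : ℝ => -x^2/8) atBot atBot := h3.atBot_div_const (by norm_num)
  have h5 := Real.tendsto_exp_atBot.comp h4
  simpa using (h5.const_mul K)

lemma tendsto_g1B_atBot {t : ℝ} (ht : 0 < 1 - t^2) (u : ℝ) :
    Tendsto (fun v => g1B t u v) atBot (𝓝 0) := by
  apply squeeze_zero_norm (a := fun v =>
    ((2*Real.pi*Real.sqrt (1-t^2))⁻¹ * (1-t^2)⁻¹ * 9 * Real.exp (-u^2/8)) * Real.exp (-v^2/8))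
  · intro v
    rw [Real.norm_eq_abs]
    calc |g1B t u v| ≤ (2*Real.pi*Real.sqrt (1-t^2))⁻¹ * (1-t^2)⁻¹ * 9 *
        (Real.exp (-u^2/8) * Real.exp (-v^2/8)) := abs_g1B_le' ht le_rfl u v
      _ = ((2*Real.pi*Real.sqrt (1-t^2))⁻¹ * (1-t^2)⁻¹ * 9 * Real.exp (-u^2/8)) * Real.exp (-v^2/8) := by
        ring
  · exact tendsto_gauss_simple _

lemma tendsto_biphi_atBot {t : ℝ} (ht : 0 < 1 - t^2) (v : ℝ) :
    Tendsto (fun u => biphi t u v) atBot (𝓝 0) := by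
  apply squeeze_zero_norm (a := fun u =>
    ((2*Real.pi*Real.sqrt (1-t^2))⁻¹ * Real.exp (-v^2/8)) * Real.exp (-u^2/8))
  · intro u
    rw [Real.norm_eq_abs]
    calc |biphi t u v| ≤ (2*Real.pi*Real.sqrt (1-t^2))⁻¹ *
        (Real.exp (-u^2/8) * Real.exp (-v^2/8)) := abs_biphi_le' ht le_rfl u v
      _ = ((2*Real.pi*Real.sqrt (1-t^2))⁻¹ * Real.exp (-v^2/8)) * Real.exp (-u^2/8) := by ring
  · exact tendsto_gauss_simple _

/-! ### integrability -/

lemma integrable_gauss8 : Integrable (fun x : ℝ => Real.exp (-x^2/8)) := by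
  have h := integrable_exp_neg_mul_sq (show (0:ℝ) < 1/8 by norm_num)
  have : (fun x : ℝ => Real.exp (-x^2/8)) = fun x : ℝ => Real.exp (-(1/8 : ℝ)*x^2) := by
    funext x; congr 1; ring
  rw [this]; exact h

lemma measurable_biphi3 : Measurable (fun z : (ℝ×ℝ)×ℝ => biphi z.2 z.1.1 z.1.2) := by
  unfold biphi; fun_prop

lemma measurable_DtB3 : Measurable (fun z : (ℝ×ℝ)×ℝ => DtB z.2 z.1.1 z.1.2) := by
  unfold DtB biphi; fun_prop

lemma measurable_DtB_pair (t : ℝ) : Measurable (fun p : ℝ×ℝ => DtB t p.1 p.2) := by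
  unfold DtB biphi; fun_prop

lemma measurable_biphi_pair (t : ℝ) : Measurable (fun p : ℝ×ℝ => biphi t p.1 p.2) := by
  unfold biphi; fun_prop

variable {c₁ c₂ : ℝ}

/-- the restricted product measure on the rectangle -/
noncomputable abbrev ν (c₁ c₂ : ℝ) : Measure (ℝ×ℝ) :=
  (volume.restrict (Iic c₁)).prod (volume.restrict (Iic c₂))

lemma nu_eq (c₁ c₂ : ℝ) :
    (volume : Measure (ℝ×ℝ)).restrict (Iic c₁ ×ˢ Iic c₂) = ν c₁ c₂ := by
  unfold ν
  rw [Measure.prod_restrict, ← Measure.volume_eq_prod]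

lemma integrable_gaussPair (C : ℝ) :
    Integrable (fun p : ℝ×ℝ => C * (Real.exp (-p.1^2/8) * Real.exp (-p.2^2/8))) (ν c₁ c₂) :=
  ((integrable_gauss8.restrict (s := Iic c₁)).mul_prod
    (integrable_gauss8.restrict (s := Iic c₂))).const_mul C

lemma integrable_biphi_nu {t : ℝ} (ht : 0 < 1 - t^2) :
    Integrable (fun p : ℝ×ℝ => biphi t p.1 p.2) (ν c₁ c₂) := by
  apply Integrable.mono' (integrable_gaussPair ((2*Real.pi*Real.sqrt (1-t^2))⁻¹))
    (measurable_biphi_pair t).aestronglyMeasurable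
  refine Filter.Eventually.of_forall fun p => ?_
  rw [Real.norm_eq_abs]
  exact abs_biphi_le' ht le_rfl p.1 p.2

lemma integrable_DtB_nu {t : ℝ} (ht : 0 < 1 - t^2) :
    Integrable (fun p : ℝ×ℝ => DtB t p.1 p.2) (ν c₁ c₂) := by
  apply Integrable.mono'
    (integrable_gaussPair ((2*Real.pi*Real.sqrt (1-t^2))⁻¹ * ((1-t^2)^2)⁻¹ * 25))
    (measurable_DtB_pair t).aestronglyMeasurable
  refine Filter.Eventually.of_forall fun p => ?_
  rw [Real.norm_eq_abs]
  exact abs_DtB_le' ht le_rfl p.1 p.2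

lemma integrableOn_DtB_Iic {t : ℝ} (ht : 0 < 1 - t^2) (u : ℝ) :
    IntegrableOn (fun v => DtB t u v) (Iic c₂) := by
  apply Integrable.mono'
    (((integrable_gauss8.const_mul
      ((2*Real.pi*Real.sqrt (1-t^2))⁻¹ * ((1-t^2)^2)⁻¹ * 25 * Real.exp (-u^2/8))).restrict
        (s := Iic c₂)))
    (by apply Measurable.aestronglyMeasurable; unfold DtB biphi; fun_prop)
  refine Filter.Eventually.of_forall fun v => ?_
  rw [Real.norm_eq_abs]
  calc |DtB t u v| ≤ (2*Real.pi*Real.sqrt (1-t^2))⁻¹ * ((1-t^2)^2)⁻¹ * 25 *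
      (Real.exp (-u^2/8) * Real.exp (-v^2/8)) := abs_DtB_le' ht le_rfl u v
    _ = (2*Real.pi*Real.sqrt (1-t^2))⁻¹ * ((1-t^2)^2)⁻¹ * 25 * Real.exp (-u^2/8) *
        Real.exp (-v^2/8) := by ring

lemma integrableOn_g1B_Iic {t : ℝ} (ht : 0 < 1 - t^2) (v : ℝ) :
    IntegrableOn (fun u => g1B t u v) (Iic c₁) := by
  apply Integrable.mono'
    (((integrable_gauss8.const_mul
      ((2*Real.pi*Real.sqrt (1-t^2))⁻¹ * (1-t^2)⁻¹ * 9 * Real.exp (-v^2/8))).restrict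
        (s := Iic c₁)))
    (by apply Measurable.aestronglyMeasurable; unfold g1B biphi; fun_prop)
  refine Filter.Eventually.of_forall fun u => ?_
  rw [Real.norm_eq_abs]
  calc |g1B t u v| ≤ (2*Real.pi*Real.sqrt (1-t^2))⁻¹ * (1-t^2)⁻¹ * 9 *
      (Real.exp (-u^2/8) * Real.exp (-v^2/8)) := abs_g1B_le' ht le_rfl u v
    _ = (2*Real.pi*Real.sqrt (1-t^2))⁻¹ * (1-t^2)⁻¹ * 9 * Real.exp (-v^2/8) *
        Real.exp (-u^2/8) := by ring

/-! ### the inner double-integral evaluation (iterated FTC) -/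

lemma inner_eval {t : ℝ} (ht : t ∈ Set.Ioo (-1:ℝ) 1) (c₁ c₂ : ℝ) :
    ∫ p, DtB t p.1 p.2 ∂(ν c₁ c₂) = biphi t c₁ c₂ := by
  have h1 : 0 < 1 - t^2 := one_sub_sq_pos ht
  unfold ν
  rw [MeasureTheory.integral_prod _ (integrable_DtB_nu (c₁ := c₁) (c₂ := c₂) h1)]
  have E1 : ∀ u, ∫ v in Iic c₂, DtB t u v = g1B t u c₂ := by
    intro u
    have := integral_Iic_of_hasDerivAt_of_tendsto' (a := c₂) (m := 0)
      (fun v _ => hasDerivAt_g1B_v h1 u v) (integrableOn_DtB_Iic h1 u)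
      (tendsto_g1B_atBot h1 u)
    simpa using this
  simp_rw [E1]
  have := integral_Iic_of_hasDerivAt_of_tendsto' (a := c₁) (m := 0)
    (fun u _ => hasDerivAt_biphi_u h1 u c₂) (integrableOn_g1B_Iic h1 c₂)
    (tendsto_biphi_atBot h1 c₂)
  simpa using this

/-! ### FTC in the correlation parameter -/

lemma min_le_one_sub_sq {a b t : ℝ} (hta : a ≤ t) (htb : t ≤ b) :
    min (1-a^2) (1-b^2) ≤ 1 - t^2 := by
  rcases le_or_gt 0 t with h|h
  · refine le_trans (min_le_right _ _) ?_; nlinarith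
  · refine le_trans (min_le_left _ _) ?_; nlinarith

lemma sigma_pos {a b : ℝ} (ha : a ∈ Set.Ioo (-1:ℝ) 1) (hb : b ∈ Set.Ioo (-1:ℝ) 1) :
    0 < min (1-a^2) (1-b^2) :=
  lt_min (one_sub_sq_pos ha) (one_sub_sq_pos hb)

lemma integrableOn_DtB_Ioc {a b : ℝ} (ha : a ∈ Set.Ioo (-1:ℝ) 1) (hb : b ∈ Set.Ioo (-1:ℝ) 1)
    (hab : a < b) (u v : ℝ) : IntegrableOn (fun t => DtB t u v) (Ioc a b) := by
  set σ := min (1-a^2) (1-b^2) with hσdef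
  have hσ : 0 < σ := sigma_pos ha hb
  apply Integrable.mono' (g := fun _ : ℝ =>
    (2*Real.pi*Real.sqrt σ)⁻¹ * (σ^2)⁻¹ * 25 * (Real.exp (-u^2/8) * Real.exp (-v^2/8)))
    (integrableOn_const measure_Ioc_lt_top.ne)
    (by apply Measurable.aestronglyMeasurable; unfold DtB biphi; fun_prop)
  rw [ae_restrict_iff' measurableSet_Ioc]
  refine Filter.Eventually.of_forall fun t htm => ?_
  rw [Real.norm_eq_abs]
  exact abs_DtB_le' hσ (min_le_one_sub_sq htm.1.le htm.2) u v

lemma ftc_t {a b : ℝ} (ha : a ∈ Set.Ioo (-1:ℝ) 1) (hb : b ∈ Set.Ioo (-1:ℝ) 1)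
    (hab : a < b) (u v : ℝ) :
    biphi b u v - biphi a u v = ∫ t in Ioc a b, DtB t u v := by
  have key := intervalIntegral.integral_eq_sub_of_hasDerivAt
    (f := fun t => biphi t u v) (f' := fun t => DtB t u v) (a := a) (b := b)
    (fun t htm => by
      rw [Set.uIcc_of_le hab.le] at htm
      have h1 : 0 < 1 - t^2 :=
        lt_of_lt_of_le (sigma_pos ha hb) (min_le_one_sub_sq htm.1 htm.2)
      exact hasDerivAt_biphi_t h1 u v)
    (by
      rw [intervalIntegrable_iff_integrableOn_Ioc_of_le hab.le]
      exact integrableOn_DtB_Ioc ha hb hab u v)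
  rw [intervalIntegral.integral_of_le hab.le] at key
  rw [key]

/-! ### the joint integrability for the Fubini swap -/

lemma integrable_swap {a b : ℝ} (ha : a ∈ Set.Ioo (-1:ℝ) 1) (hb : b ∈ Set.Ioo (-1:ℝ) 1)
    (hab : a < b) (c₁ c₂ : ℝ) :
    Integrable (Function.uncurry fun (p : ℝ×ℝ) (t : ℝ) => DtB t p.1 p.2)
      ((ν c₁ c₂).prod (volume.restrict (Ioc a b))) := by
  set σ := min (1-a^2) (1-b^2) with hσdef
  have hσ : 0 < σ := sigma_pos ha hb
  have hints : Integrable (fun z : (ℝ×ℝ)×ℝ =>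
      (fun p : ℝ×ℝ => (2*Real.pi*Real.sqrt σ)⁻¹ * (σ^2)⁻¹ * 25 *
        (Real.exp (-p.1^2/8) * Real.exp (-p.2^2/8))) z.1 * (fun _ : ℝ => (1:ℝ)) z.2)
      ((ν c₁ c₂).prod (volume.restrict (Ioc a b))) :=
    (integrable_gaussPair _).mul_prod (integrableOn_const measure_Ioc_lt_top.ne)
  apply Integrable.mono' hints measurable_DtB3.aestronglyMeasurable
  have hmeas : ((ν c₁ c₂).prod (volume.restrict (Ioc a b))) =
      ((ν c₁ c₂).prod volume).restrict (univ ×ˢ Ioc a b) := by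
    rw [← Measure.prod_restrict, Measure.restrict_univ]
  rw [hmeas, ae_restrict_iff' (MeasurableSet.univ.prod measurableSet_Ioc)]
  refine Filter.Eventually.of_forall fun z hz => ?_
  rw [Real.norm_eq_abs]
  have hb' := abs_DtB_le' hσ (min_le_one_sub_sq hz.2.1.le hz.2.2) z.1.1 z.1.2
  simpa [Function.uncurry, mul_one] using hb'

/-! ### Plackett's identity -/

lemma plackett {a b : ℝ} (ha : a ∈ Set.Ioo (-1:ℝ) 1) (hb : b ∈ Set.Ioo (-1:ℝ) 1)
    (hab : a < b) (c₁ c₂ : ℝ) :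
    binormProb b c₁ c₂ - binormProb a c₁ c₂ = ∫ t in Ioc a b, biphi t c₁ c₂ := by
  have h1a : 0 < 1 - a^2 := one_sub_sq_pos ha
  have h1b : 0 < 1 - b^2 := one_sub_sq_pos hb
  unfold binormProb
  rw [nu_eq]
  rw [← MeasureTheory.integral_sub (integrable_biphi_nu h1b) (integrable_biphi_nu h1a)]
  have hptwise : (fun p : ℝ×ℝ => biphi b p.1 p.2 - biphi a p.1 p.2) =
      fun p : ℝ×ℝ => ∫ t in Ioc a b, DtB t p.1 p.2 := by
    funext p; exact ftc_t ha hb hab p.1 p.2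
  rw [hptwise]
  rw [MeasureTheory.integral_integral_swap (integrable_swap ha hb hab c₁ c₂)]
  refine setIntegral_congr_fun measurableSet_Ioc fun t htm => ?_
  exact inner_eval ⟨lt_of_lt_of_le ha.1 htm.1.le, lt_of_le_of_lt htm.2 hb.2⟩ c₁ c₂

/-! ### strict monotonicity -/

lemma biphi_lower {t σ : ℝ} (hσ : 0 < σ) (hts : σ ≤ 1 - t^2) (u v : ℝ) :
    (2*Real.pi)⁻¹ * Real.exp (-(2*(u^2+v^2))/(2*σ)) ≤ biphi t u v := by
  have ht : 0 < 1 - t^2 := lt_of_lt_of_le hσ hts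
  have ht1 : |t| ≤ 1 := abs_t_le hσ hts
  unfold biphi
  have hS1 : Real.sqrt (1 - t^2) ≤ 1 := Real.sqrt_le_one.2 (by nlinarith [sq_nonneg t])
  have hSpos : 0 < Real.sqrt (1 - t^2) := Real.sqrt_pos.2 ht
  have h1 : (2*Real.pi)⁻¹ ≤ (2 * Real.pi * Real.sqrt (1 - t^2))⁻¹ := by
    apply inv_anti₀ (by positivity)
    nlinarith [Real.pi_pos]
  have h2 : Real.exp (-(2*(u^2+v^2))/(2*σ)) ≤
      Real.exp (-(u ^ 2 - 2 * t * u * v + v ^ 2) / (2 * (1 - t ^ 2))) := by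
    apply Real.exp_le_exp.2
    rw [neg_div, neg_div, neg_le_neg_iff]
    apply div_le_div₀ (by positivity) ?_ (by positivity) (by nlinarith)
    nlinarith [abs_le.1 ht1, sq_nonneg (u+v), sq_nonneg (u-v)]
  calc (2*Real.pi)⁻¹ * Real.exp (-(2*(u^2+v^2))/(2*σ))
      ≤ (2 * Real.pi * Real.sqrt (1 - t^2))⁻¹ *
        Real.exp (-(u ^ 2 - 2 * t * u * v + v ^ 2) / (2 * (1 - t ^ 2))) := by
        apply mul_le_mul h1 h2 (Real.exp_pos _).le (by positivity)
    _ = _ := rfl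

lemma integrableOn_biphi_Ioc {a b : ℝ} (ha : a ∈ Set.Ioo (-1:ℝ) 1) (hb : b ∈ Set.Ioo (-1:ℝ) 1)
    (u v : ℝ) : IntegrableOn (fun t => biphi t u v) (Ioc a b) := by
  set σ := min (1-a^2) (1-b^2) with hσdef
  have hσ : 0 < σ := sigma_pos ha hb
  apply Integrable.mono' (g := fun _ : ℝ =>
    (2*Real.pi*Real.sqrt σ)⁻¹ * (Real.exp (-u^2/8) * Real.exp (-v^2/8)))
    (integrableOn_const measure_Ioc_lt_top.ne)
    (by apply Measurable.aestronglyMeasurable; unfold biphi; fun_prop)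
  rw [ae_restrict_iff' measurableSet_Ioc]
  refine Filter.Eventually.of_forall fun t htm => ?_
  rw [Real.norm_eq_abs]
  exact abs_biphi_le' hσ (min_le_one_sub_sq htm.1.le htm.2) u v

lemma binormProb_strictMono {a b : ℝ} (ha : a ∈ Set.Ioo (-1:ℝ) 1) (hb : b ∈ Set.Ioo (-1:ℝ) 1)
    (hab : a < b) (c₁ c₂ : ℝ) : binormProb a c₁ c₂ < binormProb b c₁ c₂ := by
  rw [← sub_pos, plackett ha hb hab c₁ c₂]
  set σ := min (1-a^2) (1-b^2) with hσdef
  have hσ : 0 < σ := sigma_pos ha hb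
  set m := (2*Real.pi)⁻¹ * Real.exp (-(2*(c₁^2+c₂^2))/(2*σ)) with hmdef
  have hm : 0 < m := by
    have := Real.pi_pos
    positivity
  have hlow : ∫ t in Ioc a b, (fun _ : ℝ => m) t ≤ ∫ t in Ioc a b, biphi t c₁ c₂ := by
    apply setIntegral_mono_on (integrableOn_const measure_Ioc_lt_top.ne)
      (integrableOn_biphi_Ioc ha hb c₁ c₂) measurableSet_Ioc
    intro t htm
    exact biphi_lower hσ (min_le_one_sub_sq htm.1.le htm.2) c₁ c₂
  have hconst : ∫ t in Ioc a b, (fun _ : ℝ => m) t = (b - a) * m := by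
    rw [setIntegral_const, Real.volume_real_Ioc_of_le (by linarith), smul_eq_mul]
  rw [hconst] at hlow
  have : 0 < (b - a) * m := by
    apply mul_pos (by linarith) hm
  linarith

end BiphiAux

/-- Theorem 6(c), sign-flip case: if `c₁ > 0 > c₁'` and `c₂ < 0`, then the two
probabilities `P(ε₁ ≤ c₁, ε₂ ≤ c₂)` and `P(ε₁ ≤ c₁', ε₂ ≤ c₂)` uniquely determine the
correlation `ρ ∈ (-1, 1)`. -/
theorem stmt_15 (c₁ c₁' c₂ : ℝ) (hc₁ : 0 < c₁) (hc₁' : c₁' < 0) (hne : c₁ ≠ c₁')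
    (hc₂ : c₂ < 0) (ρ ρ' : ℝ) (hρ : ρ ∈ Set.Ioo (-1 : ℝ) 1) (hρ' : ρ' ∈ Set.Ioo (-1 : ℝ) 1)
    (h1 : binormProb ρ c₁ c₂ = binormProb ρ' c₁ c₂)
    (h2 : binormProb ρ c₁' c₂ = binormProb ρ' c₁' c₂) : ρ = ρ' := by
  rcases lt_trichotomy ρ ρ' with h | h | h
  · exact absurd h1 (ne_of_lt (BiphiAux.binormProb_strictMono hρ hρ' h c₁ c₂))
  · exact h
  · exact absurd h1.symm (ne_of_lt (BiphiAux.binormProb_strictMono hρ' hρ h c₁ c₂))
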